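/- arXiv:2201.04362 — 4 statements merged into one kernel-verified Lean document; each statement's English description precedes it below -/
import Mathlib

section
/- Let H and A be closed operators on a Hilbert space with H self-adjoint, H ≥ 0, and D(A) ⊇ D(H). If H ≥ λ A*A for some λ > 0 (i.e. ‖(H+μ)^{1/2}ψ‖² ≥ λ‖Aψ‖² for ψ ∈ D(H)), then D(A) ⊇ D(H^{1/2}) and for every μ > 0 the bounded operator A(H+μ)^{-1}A* satisfies A(H+μ)^{-1}A* ≤ 1/λ. -/
/-!
Along a sequence that converges in `E` and is Cauchy for the form of `H`, the bound
`λ‖Aψ‖² ≤ ⟪ψ, Hψ⟫` makes the images under `A` Cauchy, so closedness of `A` puts the limit in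
`D(A)`. For the second part, if `(H + μ)ψ = A*φ` then `Re ⟪Aψ, φ⟫ = Re ⟪ψ, Hψ⟫ + μ‖ψ‖²` dominates
`λ‖Aψ‖²`, and any pair `x, y` with `λ‖x‖² ≤ Re ⟪x, y⟫` satisfies `Re ⟪x, y⟫ ≤ ‖y‖² / λ`.
-/

open scoped InnerProductSpace
open Filter Topology

theorem LinearPMap.IsClosed.mem_domain_of_tendsto {R E F : Type*} [CommRing R] [AddCommGroup E]
    [Module R E] [TopologicalSpace E] [UniformSpace F] [CompleteSpace F] [AddCommGroup F]
    [Module R F] {A : E →ₗ.[R] F} (hA : A.IsClosed) {x : ℕ → A.domain} {ψ : E}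
    (hx : Tendsto (fun n => (x n : E)) atTop (𝓝 ψ)) (hAx : CauchySeq fun n => A (x n)) :
    ψ ∈ A.domain := by
  obtain ⟨η, hη⟩ := cauchySeq_tendsto_of_complete hAx
  have hgraph : (ψ, η) ∈ A.graph :=
    hA.mem_of_tendsto (hx.prodMk_nhds hη) (Eventually.of_forall fun n => A.mem_graph (x n))
  exact A.mem_domain_of_mem_graph hgraph

theorem cauchySeq_map_of_mul_norm_sq_le {V E : Type*} [AddCommGroup V] [SeminormedAddCommGroup E]
    (T : V →+ E) {q : V → ℝ} {c : ℝ} (hc : 0 < c) (hT : ∀ v, c * ‖T v‖ ^ 2 ≤ q v) {f : ℕ → V}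
    (hf : ∀ ε > (0 : ℝ), ∃ N, ∀ m ≥ N, ∀ n ≥ N, q (f m - f n) < ε) :
    CauchySeq fun n => T (f n) := by
  refine Metric.cauchySeq_iff.2 fun ε hε => ?_
  obtain ⟨N, hN⟩ := hf (c * ε ^ 2) (by positivity)
  refine ⟨N, fun m hm n hn => ?_⟩
  have hsq : c * ‖T (f m - f n)‖ ^ 2 < c * ε ^ 2 := (hT _).trans_lt (hN m hm n hn)
  rw [dist_eq_norm, ← map_sub]
  exact lt_of_pow_lt_pow_left₀ 2 hε.le (lt_of_mul_lt_mul_left hsq hc.le)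

section InnerProduct

variable {𝕜 E : Type*} [RCLike 𝕜] [NormedAddCommGroup E] [InnerProductSpace 𝕜 E]

theorem re_inner_le_inv_mul_norm_sq_of_mul_norm_sq_le {x y : E} {c : ℝ} (hc : 0 < c)
    (h : c * ‖x‖ ^ 2 ≤ RCLike.re ⟪x, y⟫_𝕜) : RCLike.re ⟪x, y⟫_𝕜 ≤ c⁻¹ * ‖y‖ ^ 2 := by
  have hcs := re_inner_le_norm (𝕜 := 𝕜) x y
  -- AM-GM: `2‖x‖‖y‖ ≤ c‖x‖² + ‖y‖² / c`
  have hamgm : 0 ≤ c⁻¹ * (c * ‖x‖ - ‖y‖) ^ 2 := by positivity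
  have hexp : c⁻¹ * (c * ‖x‖ - ‖y‖) ^ 2 = c * ‖x‖ ^ 2 - 2 * (‖x‖ * ‖y‖) + c⁻¹ * ‖y‖ ^ 2 := by
    field_simp
    ring
  linarith

theorem re_inner_add_real_smul_self (x y : E) (μ : ℝ) :
    RCLike.re ⟪x + (μ : 𝕜) • y, y⟫_𝕜 = RCLike.re ⟪y, x⟫_𝕜 + μ * ‖y‖ ^ 2 := by
  rw [inner_add_left, inner_smul_real_left, map_add, inner_re_symm, RCLike.smul_re,
    inner_self_eq_norm_sq]

end InnerProduct

/-- `D(H^{1/2})` is encoded as the limits of sequences in `D(H)` that are Cauchy for the form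
`⟪ψ, Hψ⟫`, and `A(H+μ)⁻¹A* ≤ 1/λ` as the bound on `Re ⟪Aψ, φ⟫` whenever `(H+μ)ψ = A*φ`. -/
theorem lemma_basic_form_bound_general
    {E : Type*} [NormedAddCommGroup E] [InnerProductSpace ℂ E] [CompleteSpace E]
    (H A : E →ₗ.[ℂ] E)
    (hAclosed : A.IsClosed)
    (hAdense : Dense (A.domain : Set E))
    (hdom : H.domain ≤ A.domain)
    (lam : ℝ) (hlam : 0 < lam)
    (hform : ∀ ψ : H.domain, lam * ‖A ⟨(ψ : E), hdom ψ.2⟩‖ ^ 2 ≤ (⟪(ψ : E), H ψ⟫_ℂ).re) :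
    (∀ ψ : E, ∀ f : ℕ → H.domain,
        Filter.Tendsto (fun n => ((f n : E))) Filter.atTop (nhds ψ) →
        (∀ ε > (0:ℝ), ∃ N, ∀ m ≥ N, ∀ n ≥ N,
          (⟪((f m - f n : H.domain) : E), H (f m - f n)⟫_ℂ).re < ε) →
        ψ ∈ A.domain) ∧
    (∀ μ : ℝ, 0 < μ → ∀ φ : A.adjoint.domain, ∀ ψ : H.domain,
        H ψ + μ • (ψ : E) = A.adjoint φ →
        (⟪A ⟨(ψ : E), hdom ψ.2⟩, (φ : E)⟫_ℂ).re ≤ (1 / lam) * ‖(φ : E)‖ ^ 2) := by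
  constructor
  · intro ψ f hf hform_cauchy
    exact hAclosed.mem_domain_of_tendsto (x := fun n => Submodule.inclusion hdom (f n)) hf
      (cauchySeq_map_of_mul_norm_sq_le (A.toFun ∘ₗ Submodule.inclusion hdom).toAddMonoidHom hlam
        hform hform_cauchy)
  · intro μ hμ φ ψ hψ
    rw [one_div]
    refine re_inner_le_inv_mul_norm_sq_of_mul_norm_sq_le (𝕜 := ℂ) hlam ?_
    calc lam * ‖A ⟨(ψ : E), hdom ψ.2⟩‖ ^ 2 ≤ (⟪(ψ : E), H ψ⟫_ℂ).re := hform ψ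
      _ ≤ (⟪(ψ : E), H ψ⟫_ℂ).re + μ * ‖(ψ : E)‖ ^ 2 := le_add_of_nonneg_right (by positivity)
      _ = RCLike.re ⟪H ψ + (μ : ℂ) • (ψ : E), ψ⟫_ℂ :=
        (re_inner_add_real_smul_self (𝕜 := ℂ) _ _ μ).symm
      _ = RCLike.re ⟪A ⟨(ψ : E), hdom ψ.2⟩, (φ : E)⟫_ℂ := by
        rw [Complex.coe_smul, hψ]
        exact (congrArg RCLike.re (A.adjoint_isFormalAdjoint hAdense φ ⟨ψ, hdom ψ.2⟩)).trans
          (inner_re_symm _ _)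

/-- Lemma 2.2.  Let `H, A` be closed operators on a Hilbert space with `H` self-adjoint,
`H ≥ 0` and `D(A) ⊇ D(H)`.  If `H ≥ λ A*A` in the quadratic form sense
(`⟪ψ, Hψ⟫ ≥ λ‖Aψ‖²` for `ψ ∈ D(H)`), then `D(A) ⊇ D(H^{1/2})` — here expressed as:
any `ψ` that is a limit of a sequence in `D(H)` which is Cauchy for the form norm of `H`
belongs to `D(A)` — and for every `μ > 0` the operator `A(H+μ)⁻¹A*` is bounded by `1/λ`:
whenever `(H+μ)ψ = A*φ` one has `Re ⟪Aψ, φ⟫ ≤ (1/λ)‖φ‖²`. -/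
theorem lemma_basic_form_bound
    {E : Type*} [NormedAddCommGroup E] [InnerProductSpace ℂ E] [CompleteSpace E]
    (H A : E →ₗ.[ℂ] E)
    (hHsa : IsSelfAdjoint H) (hHclosed : H.IsClosed) (hAclosed : A.IsClosed)
    (hAdense : Dense (A.domain : Set E))
    (hdom : H.domain ≤ A.domain)
    (hHpos : ∀ ψ : H.domain, 0 ≤ (⟪(ψ : E), H ψ⟫_ℂ).re)
    (lam : ℝ) (hlam : 0 < lam)
    (hform : ∀ ψ : H.domain, lam * ‖A ⟨(ψ : E), hdom ψ.2⟩‖ ^ 2 ≤ (⟪(ψ : E), H ψ⟫_ℂ).re) :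
    (∀ ψ : E, ∀ f : ℕ → H.domain,
        Filter.Tendsto (fun n => ((f n : E))) Filter.atTop (nhds ψ) →
        (∀ ε > (0:ℝ), ∃ N, ∀ m ≥ N, ∀ n ≥ N,
          (⟪((f m - f n : H.domain) : E), H (f m - f n)⟫_ℂ).re < ε) →
        ψ ∈ A.domain) ∧
    (∀ μ : ℝ, 0 < μ → ∀ φ : A.adjoint.domain, ∀ ψ : H.domain,
        H ψ + μ • (ψ : E) = A.adjoint φ →
        (⟪A ⟨(ψ : E), hdom ψ.2⟩, (φ : E)⟫_ℂ).re ≤ (1 / lam) * ‖(φ : E)‖ ^ 2) :=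
  lemma_basic_form_bound_general H A hAclosed hAdense hdom lam hlam hform
end

section
/- For any y ∈ ℝ² with y ≠ 0, the integral I(y) = ∫_{ℝ²} |e^{i p·y} − 1|² / (|y|² (|p|⁴ + |p|²)) dp satisfies I(y) ≤ π(|log|y|| + 2). -/
/-!
Split the plane at `|p| = R` with `R² = 8 / |y|²`. Inside the disc, `|e^{it} - 1| ≤ |t|`
bounds the integrand by `⟪p, y⟫² / (|y|² (|p|⁴ + |p|²))`, which separates in polar
coordinates: the angular average of `⟪p, y⟫²` is `|p|² |y|² / 2`, leaving
`(π / 2) log (1 + R²)`. Outside, `|e^{it} - 1| ≤ 2` leaves `4π / (|y|² R²) = π / 2`.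
Finally `log (1 + R²) ≤ |log R²| + log 2` and `4 log 2 ≤ 3`.
-/

open MeasureTheory Real Set
open scoped RealInnerProductSpace

section Polar

variable {F : ℝ × ℝ → ℝ} {f g : ℝ → ℝ}

theorem integrable_of_polar_eq_mul
    (hF : ∀ r > 0, ∀ θ ∈ Ioo (-π) π, r * F (r * cos θ, r * sin θ) = f r * g θ)
    (hf : IntegrableOn f (Ioi 0)) (hg : IntegrableOn g (Ioo (-π) π)) : Integrable F := by
  have hpolar : IntegrableOn (fun p : ℝ × ℝ => |p.1| • F (polarCoord.symm p))
      polarCoord.target := by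
    refine IntegrableOn.congr_fun (f := fun p => f p.1 * g p.2) ?_ (fun p hp => ?_)
      polarCoord.open_target.measurableSet
    · rw [IntegrableOn, show polarCoord.target = Ioi (0 : ℝ) ×ˢ Ioo (-π) π from rfl,
        Measure.volume_eq_prod, ← Measure.prod_restrict]
      exact hf.mul_prod hg
    · rw [abs_of_pos hp.1, smul_eq_mul]
      exact (hF p.1 hp.1 p.2 hp.2).symm
  rw [← integrableOn_univ, integrableOn_congr_set_ae polarCoord_source_ae_eq_univ.symm,
    ← polarCoord.symm_image_target_eq_source,
    integrableOn_image_iff_integrableOn_abs_det_fderiv_smul volume (s := polarCoord.target)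
      polarCoord.open_target.measurableSet
      (fun p _ => (hasFDerivAt_polarCoord_symm p).hasFDerivWithinAt) polarCoord.symm.injOn]
  simpa only [det_fderivPolarCoordSymm] using hpolar

theorem integral_eq_of_polar_eq_mul
    (hF : ∀ r > 0, ∀ θ ∈ Ioo (-π) π, r * F (r * cos θ, r * sin θ) = f r * g θ) :
    ∫ v, F v = (∫ r in Ioi 0, f r) * ∫ θ in Ioo (-π) π, g θ := by
  rw [← integral_comp_polarCoord_symm,
    setIntegral_congr_fun (f := fun p : ℝ × ℝ => p.1 • F (polarCoord.symm p))
      (g := fun p => f p.1 * g p.2)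
      polarCoord.open_target.measurableSet fun p hp => hF p.1 hp.1 p.2 hp.2,
    show polarCoord.target = Ioi (0 : ℝ) ×ˢ Ioo (-π) π from rfl,
    Measure.volume_eq_prod, ← Measure.prod_restrict, integral_prod_mul]

end Polar

theorem integral_Ioc_div_sq_add_one {R : ℝ} (hR : 0 ≤ R) :
    ∫ r in Ioc 0 R, r / (r ^ 2 + 1) = log (1 + R ^ 2) / 2 := by
  have hderiv : ∀ r ∈ uIcc 0 R,
      HasDerivAt (fun r => log (1 + r ^ 2) / 2) (r / (r ^ 2 + 1)) r := by
    intro r _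
    refine ((((hasDerivAt_pow 2 r).const_add 1).log (by positivity)).div_const 2).congr_deriv ?_
    field_simp
    ring
  rw [← intervalIntegral.integral_of_le hR, intervalIntegral.integral_eq_sub_of_hasDerivAt hderiv
    ((continuous_id.div (by fun_prop) fun r => by positivity).intervalIntegrable _ _)]
  simp

theorem integral_Ioo_mul_cos_add_mul_sin_sq (u w : ℝ) :
    ∫ θ in Ioo (-π) π, (u * cos θ + w * sin θ) ^ 2 = π * (u ^ 2 + w ^ 2) := by
  have hexpand : ∀ θ, (u * cos θ + w * sin θ) ^ 2
      = u ^ 2 * cos θ ^ 2 + (2 * u * w * (sin θ * cos θ) + w ^ 2 * sin θ ^ 2) := fun θ => by ring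
  have hc : ∀ {f : ℝ → ℝ}, Continuous f → IntervalIntegrable f volume (-π) π :=
    fun h => h.intervalIntegrable _ _
  rw [← integral_Ioc_eq_integral_Ioo, ← intervalIntegral.integral_of_le (by linarith [pi_pos])]
  simp_rw [hexpand]
  rw [intervalIntegral.integral_add (hc (by fun_prop)) ((hc (by fun_prop)).add (hc (by fun_prop))),
    intervalIntegral.integral_add (hc (by fun_prop)) (hc (by fun_prop)),
    intervalIntegral.integral_const_mul, intervalIntegral.integral_const_mul,
    intervalIntegral.integral_const_mul, integral_cos_sq, integral_sin_sq, integral_sin_mul_cos₁]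
  simp only [sin_pi, cos_pi, sin_neg, cos_neg]
  ring

theorem norm_exp_I_mul_ofReal_sub_one_sq_le_sq (t : ℝ) :
    ‖Complex.exp (Complex.I * t) - 1‖ ^ 2 ≤ t ^ 2 := by
  simpa [sq_abs] using pow_le_pow_left₀ (norm_nonneg _) norm_exp_I_mul_ofReal_sub_one_le 2

theorem norm_exp_I_mul_ofReal_sub_one_sq_le_four (t : ℝ) :
    ‖Complex.exp (Complex.I * t) - 1‖ ^ 2 ≤ 4 := by
  have h : ‖Complex.exp (Complex.I * t) - 1‖ ≤ 2 := by
    simpa [Complex.norm_exp_I_mul_ofReal, one_add_one_eq_two] using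
      norm_sub_le (Complex.exp (Complex.I * t)) 1
  nlinarith [norm_nonneg (Complex.exp (Complex.I * t) - 1)]

theorem log_one_add_le_abs_log_add_log_two {t : ℝ} (ht : 0 < t) :
    log (1 + t) ≤ |log t| + log 2 := by
  rcases le_total 1 t with h | h
  · calc log (1 + t) ≤ log (2 * t) := log_le_log (by linarith) (by linarith)
      _ = |log t| + log 2 := by
        rw [log_mul two_ne_zero ht.ne', abs_of_nonneg (log_nonneg h), add_comm]
  · calc log (1 + t) ≤ log 2 := log_le_log (by linarith) (by linarith)
      _ ≤ |log t| + log 2 := le_add_of_nonneg_left (abs_nonneg _)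

theorem log_one_add_eight_div_sq_le {a : ℝ} (ha : 0 < a) :
    log (1 + 8 / a ^ 2) ≤ 2 * |log a| + 3 := by
  have h8 : log (8 / a ^ 2) = 3 * log 2 - 2 * log a := by
    rw [log_div (by norm_num) (by positivity), log_pow, show (8 : ℝ) = 2 ^ 3 by norm_num, log_pow]
    push_cast
    ring
  have hsub : |3 * log 2 - 2 * log a| ≤ 3 * log 2 + 2 * |log a| := by
    refine (abs_sub _ _).trans_eq ?_
    rw [abs_mul, abs_mul, abs_of_pos three_pos, abs_of_pos (log_pos one_lt_two)]
    norm_num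
  have h := log_one_add_le_abs_log_add_log_two (t := 8 / a ^ 2) (by positivity)
  rw [h8] at h
  linarith [log_two_lt_d9]

section Majorants

/- `ℝ × ℝ` carries the sup norm, so the Euclidean `|v|²` is written out as `v.1 ^ 2 + v.2 ^ 2`;
`u` plays the role of `y`. -/

variable (u : ℝ × ℝ) (R : ℝ)

noncomputable def innerMajorant : ℝ × ℝ → ℝ :=
  {v | v.1 ^ 2 + v.2 ^ 2 ≤ R ^ 2}.indicator fun v =>
    (v.1 * u.1 + v.2 * u.2) ^ 2 /
      ((u.1 ^ 2 + u.2 ^ 2) * ((v.1 ^ 2 + v.2 ^ 2) ^ 2 + (v.1 ^ 2 + v.2 ^ 2)))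

noncomputable def outerMajorant : ℝ × ℝ → ℝ :=
  {v | R ^ 2 < v.1 ^ 2 + v.2 ^ 2}.indicator fun v =>
    4 / ((u.1 ^ 2 + u.2 ^ 2) * (v.1 ^ 2 + v.2 ^ 2) ^ 2)

variable {u R}

theorem norm_exp_sub_one_sq_div_le_majorant (hu : 0 < u.1 ^ 2 + u.2 ^ 2) (v : ℝ × ℝ) :
    ‖Complex.exp (Complex.I * (v.1 * u.1 + v.2 * u.2 : ℝ)) - 1‖ ^ 2 /
        ((u.1 ^ 2 + u.2 ^ 2) * ((v.1 ^ 2 + v.2 ^ 2) ^ 2 + (v.1 ^ 2 + v.2 ^ 2)))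
      ≤ innerMajorant u R v + outerMajorant u R v := by
  by_cases hR : v.1 ^ 2 + v.2 ^ 2 ≤ R ^ 2
  · simp only [innerMajorant, outerMajorant, indicator_apply, mem_ofPred_eq, if_pos hR,
      if_neg hR.not_gt, add_zero]
    gcongr ?_ / _
    exact norm_exp_I_mul_ofReal_sub_one_sq_le_sq _
  · simp only [innerMajorant, outerMajorant, indicator_apply, mem_ofPred_eq, if_neg hR,
      if_pos (not_le.mp hR), zero_add]
    have hs : 0 < v.1 ^ 2 + v.2 ^ 2 := (sq_nonneg R).trans_lt (not_le.mp hR)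
    gcongr
    · exact norm_exp_I_mul_ofReal_sub_one_sq_le_four _
    · linarith

theorem mul_innerMajorant_polar (hR : 0 ≤ R) {r : ℝ} (hr : 0 < r) (θ : ℝ) :
    r * innerMajorant u R (r * cos θ, r * sin θ) =
      (Ioc 0 R).indicator (fun r => r / (r ^ 2 + 1) / (u.1 ^ 2 + u.2 ^ 2)) r *
        (u.1 * cos θ + u.2 * sin θ) ^ 2 := by
  have hs : (r * cos θ) ^ 2 + (r * sin θ) ^ 2 = r ^ 2 := by
    linear_combination r ^ 2 * sin_sq_add_cos_sq θ
  have hmem : r ∈ Ioc 0 R ↔ r ^ 2 ≤ R ^ 2 := by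
    rw [mem_Ioc, pow_le_pow_iff_left₀ hr.le hR two_ne_zero, and_iff_right hr]
  simp only [innerMajorant, indicator_apply, mem_ofPred_eq, hs, hmem]
  split_ifs
  · field_simp
  · simp

theorem mul_outerMajorant_polar (hR : 0 ≤ R) {r : ℝ} (hr : 0 < r) (θ : ℝ) :
    r * outerMajorant u R (r * cos θ, r * sin θ) =
      (Ioi R).indicator (fun r => 4 / (u.1 ^ 2 + u.2 ^ 2) * r ^ (-3 : ℝ)) r * 1 := by
  have hs : (r * cos θ) ^ 2 + (r * sin θ) ^ 2 = r ^ 2 := by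
    linear_combination r ^ 2 * sin_sq_add_cos_sq θ
  have hmem : r ∈ Ioi R ↔ R ^ 2 < r ^ 2 := by
    rw [mem_Ioi, pow_lt_pow_iff_left₀ hR hr.le two_ne_zero]
  simp only [outerMajorant, indicator_apply, mem_ofPred_eq, hs, hmem]
  split_ifs
  · rw [rpow_neg hr.le, show (3 : ℝ) = (3 : ℕ) by norm_num, rpow_natCast]
    field_simp
  · simp

theorem integrable_innerMajorant (hR : 0 ≤ R) : Integrable (innerMajorant u R) :=
  integrable_of_polar_eq_mul (fun r hr θ _ => mul_innerMajorant_polar hR hr θ)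
    ((integrable_indicator_iff measurableSet_Ioc).2 <|
      Continuous.integrableOn_Ioc (by fun_prop (disch := intro r; positivity))).integrableOn
    ((by fun_prop : Continuous fun θ => (u.1 * cos θ + u.2 * sin θ) ^ 2).integrableOn_Icc.mono_set
      Ioo_subset_Icc_self)

theorem integral_innerMajorant (hu : 0 < u.1 ^ 2 + u.2 ^ 2) (hR : 0 ≤ R) :
    ∫ v, innerMajorant u R v = π / 2 * log (1 + R ^ 2) := by
  rw [integral_eq_of_polar_eq_mul fun r hr θ _ => mul_innerMajorant_polar hR hr θ,
    setIntegral_indicator measurableSet_Ioc, inter_eq_right.2 Ioc_subset_Ioi_self, integral_div,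
    integral_Ioc_div_sq_add_one hR, integral_Ioo_mul_cos_add_mul_sin_sq]
  field_simp

theorem integrable_outerMajorant (hR : 0 < R) : Integrable (outerMajorant u R) :=
  integrable_of_polar_eq_mul (fun r hr θ _ => mul_outerMajorant_polar hR.le hr θ)
    ((integrable_indicator_iff measurableSet_Ioi).2 <|
      (integrableOn_Ioi_rpow_of_lt (by norm_num) hR).const_mul _).integrableOn
    (integrableOn_const (by simp))

theorem integral_outerMajorant (hR : 0 < R) :
    ∫ v, outerMajorant u R v = 4 * π / ((u.1 ^ 2 + u.2 ^ 2) * R ^ 2) := by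
  rw [integral_eq_of_polar_eq_mul fun r hr θ _ => mul_outerMajorant_polar hR.le hr θ,
    setIntegral_indicator measurableSet_Ioi, inter_eq_right.2 (Ioi_subset_Ioi hR.le),
    integral_const_mul, integral_Ioi_rpow_of_lt (by norm_num) hR, setIntegral_const,
    volume_real_Ioo_of_le (by linarith [pi_pos]), show (-3 : ℝ) + 1 = -2 by norm_num,
    rpow_neg hR.le, rpow_two]
  field_simp
  ring

end Majorants

theorem EuclideanSpace.integral_fin_two {E : Type*} [NormedAddCommGroup E] [NormedSpace ℝ E]
    (f : EuclideanSpace ℝ (Fin 2) → E) : ∫ p, f p = ∫ v : ℝ × ℝ, f !₂[v.1, v.2] := by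
  rw [← (EuclideanSpace.volume_preserving_symm_measurableEquiv_toLp (Fin 2)).symm.integral_comp
      (MeasurableEquiv.toLp 2 (Fin 2 → ℝ)).symm.symm.measurableEmbedding,
    ← (volume_preserving_finTwoArrow ℝ).symm.integral_comp
      MeasurableEquiv.finTwoArrow.symm.measurableEmbedding]
  rfl

theorem EuclideanSpace.inner_toLp_pair (v : ℝ × ℝ) (y : EuclideanSpace ℝ (Fin 2)) :
    ⟪!₂[v.1, v.2], y⟫ = v.1 * y 0 + v.2 * y 1 := by
  simp [PiLp.inner_apply, Fin.sum_univ_two, mul_comm]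

theorem EuclideanSpace.norm_toLp_pair_sq (v : ℝ × ℝ) : ‖!₂[v.1, v.2]‖ ^ 2 = v.1 ^ 2 + v.2 ^ 2 := by
  simp [EuclideanSpace.norm_sq_eq, Fin.sum_univ_two]

/-- The integral `I(y) = ∫ |e^{ip·y} − 1|² / (|y|²(|p|⁴+|p|²)) dp` over `ℝ²`
satisfies `I(y) ≤ π(|log|y|| + 2)` for every `y ≠ 0`. -/
theorem integral_bound_I {y : EuclideanSpace ℝ (Fin 2)} (hy : y ≠ 0) :
    (∫ p : EuclideanSpace ℝ (Fin 2),
        ‖Complex.exp (Complex.I * (⟪p, y⟫ : ℝ)) - 1‖ ^ 2 /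
          (‖y‖ ^ 2 * (‖p‖ ^ 4 + ‖p‖ ^ 2))) ≤ π * (|log ‖y‖| + 2) := by
  set u : ℝ × ℝ := (y 0, y 1)
  have hu : u.1 ^ 2 + u.2 ^ 2 = ‖y‖ ^ 2 := by simp [u, EuclideanSpace.norm_sq_eq, Fin.sum_univ_two]
  have hy' : 0 < ‖y‖ := norm_pos_iff.2 hy
  have hu' : 0 < u.1 ^ 2 + u.2 ^ 2 := hu ▸ pow_pos hy' 2
  set R := √(8 / ‖y‖ ^ 2)
  have hR : 0 < R := sqrt_pos.2 (by positivity)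
  rw [EuclideanSpace.integral_fin_two]
  calc _ ≤ ∫ v, innerMajorant u R v + outerMajorant u R v := by
        refine integral_mono_of_nonneg (.of_forall fun v => by positivity)
          ((integrable_innerMajorant hR.le).add (integrable_outerMajorant hR))
          (.of_forall fun v => ?_)
        beta_reduce
        rw [EuclideanSpace.inner_toLp_pair, show (4 : ℕ) = 2 * 2 from rfl, pow_mul,
          EuclideanSpace.norm_toLp_pair_sq, ← hu]
        exact norm_exp_sub_one_sq_div_le_majorant hu' v
    _ = π / 2 * log (1 + 8 / ‖y‖ ^ 2) + π / 2 := by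
        rw [integral_add (integrable_innerMajorant hR.le) (integrable_outerMajorant hR),
          integral_innerMajorant hu' hR.le, integral_outerMajorant hR, hu,
          sq_sqrt (by positivity)]
        field_simp
        ring
    _ ≤ π * (|log ‖y‖| + 2) := by
        nlinarith [log_one_add_eight_div_sq_le hy', pi_pos]
end

section
/- Let N ≥ 2 and define ψ: ℝ^N → ℝ by ψ(x₁,…,x_N) = e^{−|x|²} ∏_{i<j}(x_j − x_i), where |x|² = Σᵢ xᵢ². Then ψ is antisymmetric under permutation of its arguments, ψ ∈ H²(ℝ^N), and the restriction of ∂ψ/∂x₁ to the hyperplane {x₁ = x₂} equals −e^{−|x|²} ∏_{j=3}^N (x_j − x₁) ∏_{2≤i<j}(x_j − x_i), which is not identically zero on that hyperplane. -/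
/-!
ψ is a polynomial times the Gaussian `e^{-|x|²}`.  Antisymmetry is the alternating property of
the Vandermonde determinant, `|x|²` being permutation invariant.  By the Leibniz rule and the
Faà di Bruno bound, every derivative of `e^h g` with `h`, `g` of temperate growth is bounded by a
polynomial times `e^h`; a polynomial times `e^{-|x|²}` is square integrable because
`(1 + r)^m e^{-r²} ≤ e^{m²/4}`.  On `{x₁ = x₂}` the factor `x₂ - x₁` of the Vandermonde product
vanishes, so `∂₁ψ` is `e^{-|x|²} ∂₁(x₂ - x₁) = -e^{-|x|²}` times the remaining factors.
-/

open MeasureTheory Finset Function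
open scoped ContDiff

section TemperateGrowth

variable {E : Type*} [NormedAddCommGroup E] [NormedSpace ℝ E]

@[fun_prop]
theorem Function.HasTemperateGrowth.prod {ι R : Type*} [NormedCommRing R] [NormedAlgebra ℝ R]
    {f : ι → E → R} {s : Finset ι}
    (hf : ∀ i ∈ s, (f i).HasTemperateGrowth) : (∏ i ∈ s, f i ·).HasTemperateGrowth := by
  classical
  induction s using Finset.induction_on with
  | empty => simp
  | insert a s ha ih =>
    simp only [prod_insert ha]
    exact (hf a (mem_insert_self a s)).fun_mul (ih fun i hi => hf i (mem_insert_of_mem hi))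

@[fun_prop]
theorem Function.hasTemperateGrowth_apply {ι F : Type*} [Fintype ι] [NormedAddCommGroup F]
    [NormedSpace ℝ F] (i : ι) : (fun y : ι → F => y i).HasTemperateGrowth :=
  (ContinuousLinearMap.proj (R := ℝ) (φ := fun _ : ι => F) i).hasTemperateGrowth

theorem norm_iteratedFDeriv_exp_comp_le {h : E → ℝ} (hh : h.HasTemperateGrowth) (n : ℕ) :
    ∃ (k : ℕ) (C : ℝ), ∀ m ≤ n, ∀ x,
      ‖iteratedFDeriv ℝ m (fun x => Real.exp (h x)) x‖ ≤ C * (1 + ‖x‖) ^ k * Real.exp (h x) := by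
  obtain ⟨k, C, -, hC⟩ := hh.norm_iteratedFDeriv_le_uniform n
  refine ⟨k * n, n.factorial * max C 1 ^ n, fun m hm x => ?_⟩
  set D := max C 1 * (1 + ‖x‖) ^ k
  have hD : 1 ≤ D := one_le_mul_of_one_le_of_one_le (le_max_right _ _)
    (one_le_pow₀ (by linarith [norm_nonneg x]))
  have hexp : ∀ i, ‖iteratedFDeriv ℝ i Real.exp (h x)‖ = Real.exp (h x) := fun i => by
    rw [norm_iteratedFDeriv_eq_norm_iteratedDeriv, iteratedDeriv_eq_iterate, Real.iter_deriv_exp,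
      Real.norm_of_nonneg (Real.exp_pos _).le]
  have hderiv : ∀ i, 1 ≤ i → i ≤ m → ‖iteratedFDeriv ℝ i h x‖ ≤ D ^ i := fun i hi1 him =>
    calc ‖iteratedFDeriv ℝ i h x‖ ≤ C * (1 + ‖x‖) ^ k := hC i (him.trans hm) x
      _ ≤ D := mul_le_mul_of_nonneg_right (le_max_left _ _) (by positivity)
      _ ≤ D ^ i := le_self_pow₀ hD (by omega)
  calc ‖iteratedFDeriv ℝ m (Real.exp ∘ h) x‖
      ≤ m.factorial * Real.exp (h x) * D ^ m :=
        norm_iteratedFDeriv_comp_le Real.contDiff_exp hh.1 (by exact_mod_cast le_top) x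
          (fun i _ => (hexp i).le) hderiv
    _ ≤ n.factorial * Real.exp (h x) * D ^ n := by gcongr
    _ = n.factorial * max C 1 ^ n * (1 + ‖x‖) ^ (k * n) * Real.exp (h x) := by ring

theorem norm_iteratedFDeriv_exp_comp_mul_le {h g : E → ℝ} (hh : h.HasTemperateGrowth)
    (hg : g.HasTemperateGrowth) (n : ℕ) :
    ∃ (k : ℕ) (C : ℝ), ∀ x,
      ‖iteratedFDeriv ℝ n (fun x => Real.exp (h x) * g x) x‖
        ≤ C * (1 + ‖x‖) ^ k * Real.exp (h x) := by
  obtain ⟨k₁, C₁, hC₁⟩ := norm_iteratedFDeriv_exp_comp_le hh n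
  obtain ⟨k₂, C₂, hC₂₀, hC₂⟩ := hg.norm_iteratedFDeriv_le_uniform n
  refine ⟨k₁ + k₂, 2 ^ n * C₁ * C₂, fun x => ?_⟩
  have hexp : ContDiff ℝ ∞ fun x => Real.exp (h x) := Real.contDiff_exp.comp hh.1
  calc ‖iteratedFDeriv ℝ n (fun x => Real.exp (h x) * g x) x‖
      ≤ ∑ i ∈ range (n + 1), (n.choose i : ℝ) *
          ‖iteratedFDeriv ℝ i (fun x => Real.exp (h x)) x‖ * ‖iteratedFDeriv ℝ (n - i) g x‖ :=
        norm_iteratedFDeriv_mul_le hexp hg.1 x (by exact_mod_cast le_top)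
    _ ≤ ∑ i ∈ range (n + 1), (n.choose i : ℝ) *
          (C₁ * (1 + ‖x‖) ^ k₁ * Real.exp (h x)) * (C₂ * (1 + ‖x‖) ^ k₂) := by
        gcongr with i hi
        · exact mul_nonneg (n.choose i).cast_nonneg ((norm_nonneg _).trans (hC₁ 0 n.zero_le x))
        · exact hC₁ i (by grind) x
        · exact hC₂ (n - i) (Nat.sub_le n i) x
    _ = 2 ^ n * C₁ * C₂ * (1 + ‖x‖) ^ (k₁ + k₂) * Real.exp (h x) := by
        rw [← sum_mul, ← sum_mul, ← Nat.cast_sum, Nat.sum_range_choose]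
        push_cast
        ring

end TemperateGrowth

theorem one_add_pow_mul_exp_neg_sq_le {r : ℝ} (hr : 0 ≤ r) (m : ℕ) :
    (1 + r) ^ m * Real.exp (-r ^ 2) ≤ Real.exp (m ^ 2 / 4) :=
  calc (1 + r) ^ m * Real.exp (-r ^ 2) ≤ Real.exp r ^ m * Real.exp (-r ^ 2) := by
        gcongr; linarith [Real.add_one_le_exp r]
    _ = Real.exp (m * r - r ^ 2) := by rw [← Real.exp_nat_mul, ← Real.exp_add]; ring_nf
    _ ≤ Real.exp (m ^ 2 / 4) := Real.exp_le_exp.2 (by nlinarith [sq_nonneg (r - m / 2)])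

section Gaussian

variable {ι : Type*} [Fintype ι]

theorem sq_norm_le_sum_sq (x : ι → ℝ) : ‖x‖ ^ 2 ≤ ∑ i, x i ^ 2 := by
  rw [← Real.le_sqrt (norm_nonneg _) (sum_nonneg fun i _ => sq_nonneg (x i))]
  refine (pi_norm_le_iff_of_nonneg (Real.sqrt_nonneg _)).2 fun i => ?_
  exact Real.abs_le_sqrt (single_le_sum (fun j _ => sq_nonneg (x j)) (mem_univ i))

theorem integrable_exp_neg_sum_sq :
    Integrable (μ := volume) fun x : ι → ℝ => Real.exp (-∑ i, x i ^ 2) := by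
  simp only [← sum_neg_distrib, Real.exp_sum]
  exact Integrable.fintype_prod (ι := ι) (f := fun _ t => Real.exp (-t ^ 2)) fun _ => by
    simpa using integrable_exp_neg_mul_sq one_pos

theorem memLp_two_of_norm_le_mul_exp_neg_sum_sq {F : Type*} [NormedAddCommGroup F]
    {f : (ι → ℝ) → F} (hf : AEStronglyMeasurable f) {k : ℕ} {C : ℝ}
    (hle : ∀ x, ‖f x‖ ≤ C * (1 + ‖x‖) ^ k * Real.exp (-∑ i, x i ^ 2)) : MemLp f 2 := by
  rw [memLp_two_iff_integrable_sq_norm hf]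
  refine (integrable_exp_neg_sum_sq.const_mul (C ^ 2 * Real.exp (k ^ 2))).mono'
    (hf.norm.pow 2) (ae_of_all _ fun x => ?_)
  set G := Real.exp (-∑ i, x i ^ 2)
  have hG : G ≤ Real.exp (-‖x‖ ^ 2) := Real.exp_le_exp.2 (neg_le_neg (sq_norm_le_sum_sq x))
  have hpoly := one_add_pow_mul_exp_neg_sq_le (norm_nonneg x) (2 * k)
  rw [Real.norm_of_nonneg (sq_nonneg _)]
  calc ‖f x‖ ^ 2 ≤ (C * (1 + ‖x‖) ^ k * G) ^ 2 := pow_le_pow_left₀ (norm_nonneg _) (hle x) 2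
    _ = C ^ 2 * ((1 + ‖x‖) ^ (2 * k) * G) * G := by ring
    _ ≤ C ^ 2 * ((1 + ‖x‖) ^ (2 * k) * Real.exp (-‖x‖ ^ 2)) * G := by gcongr
    _ ≤ C ^ 2 * Real.exp (k ^ 2) * G := by
        gcongr
        refine hpoly.trans_eq (congrArg Real.exp ?_)
        push_cast; ring

theorem memLp_norm_iteratedFDeriv_exp_neg_sum_sq_mul {g : (ι → ℝ) → ℝ}
    (hg : g.HasTemperateGrowth) (n : ℕ) :
    MemLp (fun x => ‖iteratedFDeriv ℝ n (fun x => Real.exp (-∑ i, x i ^ 2) * g x) x‖) 2 := by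
  have hS : (fun x : ι → ℝ => -∑ i, x i ^ 2).HasTemperateGrowth := by fun_prop
  obtain ⟨k, C, hC⟩ := norm_iteratedFDeriv_exp_comp_mul_le hS hg n
  have hsmooth : ContDiff ℝ ∞ fun x => Real.exp (-∑ i, x i ^ 2) * g x :=
    (Real.contDiff_exp.comp hS.1).mul hg.1
  refine memLp_two_of_norm_le_mul_exp_neg_sum_sq ?_ (k := k) (C := C) fun x => by simpa using hC x
  exact (hsmooth.continuous_iteratedFDeriv (by exact_mod_cast le_top)).norm.aestronglyMeasurable

end Gaussian

theorem prod_sub_of_lt_eq_det_vandermonde {R : Type*} [CommRing R] {n : ℕ} (v : Fin n → R) :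
    ∏ p ∈ univ.filter (fun p : Fin n × Fin n => p.1 < p.2), (v p.2 - v p.1)
      = (Matrix.vandermonde v).det := by
  rw [Matrix.det_vandermonde]
  exact prod_finset_product' _ _ _ (f := fun i j => v j - v i) fun p => by simp

theorem prod_sub_of_lt_comp_perm {R : Type*} [CommRing R] {n : ℕ} (σ : Equiv.Perm (Fin n))
    (v : Fin n → R) :
    ∏ p ∈ univ.filter (fun p : Fin n × Fin n => p.1 < p.2), (v (σ p.2) - v (σ p.1))
      = Equiv.Perm.sign σ * ∏ p ∈ univ.filter (fun p : Fin n × Fin n => p.1 < p.2),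
          (v p.2 - v p.1) := by
  rw [prod_sub_of_lt_eq_det_vandermonde, ← Matrix.det_permute]
  exact prod_sub_of_lt_eq_det_vandermonde (v ∘ σ)

theorem prod_lt_pairs_eq_mul {M : Type*} [CommMonoid M] {N : ℕ} {i₀ i₁ : Fin N}
    (h₀ : (i₀ : ℕ) = 0) (h₁ : (i₁ : ℕ) = 1) (f : Fin N → Fin N → M) :
    ∏ p ∈ univ.filter (fun p : Fin N × Fin N => p.1 < p.2), f p.1 p.2
      = f i₀ i₁ * ((∏ j ∈ univ.filter (fun j => i₁ < j), f i₀ j) *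
          ∏ p ∈ univ.filter (fun p : Fin N × Fin N => i₁ ≤ p.1 ∧ p.1 < p.2), f p.1 p.2) := by
  have hIoi : Ioi i₀ = Ici i₁ := by
    ext j; simp only [mem_Ioi, mem_Ici, Fin.lt_def, Fin.le_def, h₀, h₁]; omega
  have hcol : ∀ F : Fin N → M, ∏ i, F i = F i₀ * ∏ i ∈ Ici i₁, F i := fun F => by
    rw [← hIoi, ← mul_prod_erase univ F (mem_univ i₀)]
    congr 2
    ext j
    simp only [mem_erase, mem_univ, and_true, mem_Ioi, Fin.lt_def, ne_eq, Fin.ext_iff, h₀]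
    omega
  have hrow : ∏ j ∈ Ioi i₀, f i₀ j = f i₀ i₁ * ∏ j ∈ Ioi i₁, f i₀ j := by
    rw [hIoi, Ici_eq_cons_Ioi, prod_cons]
  rw [prod_finset_product' _ univ Ioi (by simp), hcol, hrow,
    prod_finset_product' _ (Ici i₁) Ioi (by simp), filter_lt_eq_Ioi, mul_assoc]

theorem fderiv_mul_apply_of_eq_zero {𝕜 E : Type*} [NontriviallyNormedField 𝕜]
    [NormedAddCommGroup E] [NormedSpace 𝕜 E] {f g : E → 𝕜} {x : E}
    (hf : DifferentiableAt 𝕜 f x) (hg : DifferentiableAt 𝕜 g x) (hfx : f x = 0) (v : E) :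
    fderiv 𝕜 (fun y => f y * g y) x v = fderiv 𝕜 f x v * g x := by
  simp [fderiv_fun_mul hf hg, hfx, mul_comm]

theorem fderiv_exp_mul_prod_sub_of_lt_of_eq {N : ℕ} {i₀ i₁ : Fin N}
    (h₀ : (i₀ : ℕ) = 0) (h₁ : (i₁ : ℕ) = 1) {x : Fin N → ℝ} (hx : x i₀ = x i₁) :
    fderiv ℝ (fun y => Real.exp (-∑ i, y i ^ 2) *
        ∏ p ∈ univ.filter (fun p : Fin N × Fin N => p.1 < p.2), (y p.2 - y p.1)) x
        (Pi.single i₀ 1)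
      = -Real.exp (-∑ i, x i ^ 2) * (∏ j ∈ univ.filter (fun j => i₁ < j), (x j - x i₀)) *
          ∏ p ∈ univ.filter (fun p : Fin N × Fin N => i₁ ≤ p.1 ∧ p.1 < p.2),
            (x p.2 - x p.1) := by
  set W : (Fin N → ℝ) → ℝ := fun y => (∏ j ∈ univ.filter (fun j => i₁ < j), (y j - y i₀)) *
    ∏ p ∈ univ.filter (fun p : Fin N × Fin N => i₁ ≤ p.1 ∧ p.1 < p.2), (y p.2 - y p.1)
  have hsplit : ∀ y : Fin N → ℝ,
      Real.exp (-∑ i, y i ^ 2) * ∏ p ∈ univ.filter (fun p : Fin N × Fin N => p.1 < p.2),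
        (y p.2 - y p.1) = (y i₁ - y i₀) * W y * Real.exp (-∑ i, y i ^ 2) := fun y => by
    rw [prod_lt_pairs_eq_mul h₀ h₁ (fun i j => y j - y i), mul_comm]
  have hne : i₁ ≠ i₀ := fun h => by simp [Fin.ext_iff, h₀, h₁] at h
  have hℓ : fderiv ℝ (fun y : Fin N → ℝ => y i₁ - y i₀) x (Pi.single i₀ 1) = -1 := by
    rw [((hasFDerivAt_apply i₁ x).fun_sub (hasFDerivAt_apply i₀ x)).fderiv]
    simp [hne]
  simp_rw [hsplit]
  rw [fderiv_mul_apply_of_eq_zero (by fun_prop) (by fun_prop) (by simp [hx]),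
    fderiv_mul_apply_of_eq_zero (by fun_prop) (by fun_prop) (by simp [hx]), hℓ]
  ring

theorem exists_eq_and_prod_sub_ne_zero {N : ℕ} {i₀ i₁ : Fin N}
    (h₀ : (i₀ : ℕ) = 0) (h₁ : (i₁ : ℕ) = 1) :
    ∃ x : Fin N → ℝ, x i₀ = x i₁ ∧
      (∏ j ∈ univ.filter (fun j => i₁ < j), (x j - x i₀)) *
        ∏ p ∈ univ.filter (fun p : Fin N × Fin N => i₁ ≤ p.1 ∧ p.1 < p.2), (x p.2 - x p.1)
        ≠ 0 := by
  refine ⟨fun j => (max (j : ℕ) 1 : ℕ), by simp [h₀, h₁], ?_⟩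
  refine mul_ne_zero (prod_ne_zero_iff.2 fun j hj => ?_) (prod_ne_zero_iff.2 fun p hp => ?_)
  · simp only [mem_filter, mem_univ, true_and, Fin.lt_def, h₁] at hj
    rw [sub_ne_zero, Ne, Nat.cast_inj, h₀]
    omega
  · simp only [mem_filter, mem_univ, true_and, Fin.lt_def, Fin.le_def, h₁] at hp
    rw [sub_ne_zero, Ne, Nat.cast_inj]
    omega

/-- The Gaussian–Vandermonde wave function `ψ(x) = e^{−|x|²} ∏_{i<j}(x_j − x_i)` is
antisymmetric, lies in `H²(ℝ^N)`, and `∂ψ/∂x₁` restricted to the hyperplane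
`{x₁ = x₂}` equals `−e^{−|x|²} ∏_{j≥3}(x_j−x_1) ∏_{2≤i<j}(x_j−x_i)`, which does not
vanish identically there. -/
theorem vandermonde_gaussian_witness (N : ℕ) (hN : 2 ≤ N)
    (ψ : (Fin N → ℝ) → ℝ)
    (hψ : ∀ x, ψ x = Real.exp (-∑ i, x i ^ 2) *
        ∏ p ∈ Finset.univ.filter (fun p : Fin N × Fin N => p.1 < p.2), (x p.2 - x p.1)) :
    -- antisymmetry
    (∀ σ : Equiv.Perm (Fin N), ∀ x, ψ (x ∘ σ) = (Equiv.Perm.sign σ : ℤ) * ψ x) ∧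
    -- ψ ∈ H²(ℝ^N): ψ and its derivatives up to order two are square integrable
    (∀ k : ℕ, k ≤ 2 → MemLp (fun x => ‖iteratedFDeriv ℝ k ψ x‖) 2 volume) ∧
    -- the restriction of ∂ψ/∂x₁ to {x₁ = x₂}
    (∀ x : Fin N → ℝ, x ⟨0, by omega⟩ = x ⟨1, by omega⟩ →
      fderiv ℝ ψ x (Pi.single ⟨0, by omega⟩ 1) =
        -Real.exp (-∑ i, x i ^ 2) *
          (∏ j ∈ Finset.univ.filter (fun j : Fin N => (⟨1, by omega⟩ : Fin N) < j),
            (x j - x ⟨0, by omega⟩)) *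
          ∏ p ∈ Finset.univ.filter
              (fun p : Fin N × Fin N => (⟨1, by omega⟩ : Fin N) ≤ p.1 ∧ p.1 < p.2),
            (x p.2 - x p.1)) ∧
    -- it is not identically zero on that hyperplane
    (∃ x : Fin N → ℝ, x ⟨0, by omega⟩ = x ⟨1, by omega⟩ ∧
      fderiv ℝ ψ x (Pi.single ⟨0, by omega⟩ 1) ≠ 0) := by
  obtain rfl : ψ = _ := funext hψ
  refine ⟨fun σ x => ?_, fun k _ => ?_,
    fun x hx => fderiv_exp_mul_prod_sub_of_lt_of_eq rfl rfl hx, ?_⟩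
  · simp only [comp_apply, Equiv.sum_comp σ fun i => x i ^ 2]
    rw [prod_sub_of_lt_comp_perm σ x, mul_left_comm]
  · exact memLp_norm_iteratedFDeriv_exp_neg_sum_sq_mul (by fun_prop) k
  · obtain ⟨x, hx, hne⟩ := exists_eq_and_prod_sub_ne_zero (N := N)
      (i₀ := ⟨0, by omega⟩) (i₁ := ⟨1, by omega⟩) rfl rfl
    refine ⟨x, hx, ?_⟩
    rw [fderiv_exp_mul_prod_sub_of_lt_of_eq rfl rfl hx, mul_assoc]
    exact mul_ne_zero (neg_ne_zero.2 (Real.exp_pos _).ne') hne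
end

section
/- Let H₀ ≥ 0 be self-adjoint and W = A*B with A, B closed, D(A) = D(B) ⊇ D(H₀), B = JA for a self-adjoint unitary J. Suppose H = H₀ − W is self-adjoint on D(H₀), H₀ − (1+δ)W ≥ 0 for some δ > 0, and C·H₀ ≥ A*A for some C > 0. Then H ≥ 0 and for all z > 0, ‖(H+z)^{-1} − (H₀+z)^{-1}‖ ≤ (1 + C(1+δ)/δ) · ‖A R₀(z)‖², where R₀(z) = (H₀+z)^{-1}. -/
open scoped InnerProductSpace

/-!
From `H₀ - (1 + δ)W ≥ 0` we get `H ≥ δ/(1+δ) H₀ ≥ δ/((1+δ)C) A*A`. Testing `(H + z)v = Wu` against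
`v` and using `W = A*JA` with `‖J‖ = 1` then gives `‖A (H + z)⁻¹ W u‖ ≤ C(1+δ)/δ ‖A u‖`, so the
resolvent identity `R = R₀ + R W R₀` yields `‖A R x‖ ≤ (1 + C(1+δ)/δ) ‖A R₀ x‖`. Finally
`R - R₀ = R₀ W R` and the symmetry of `R₀` give `‖R x - R₀ x‖² = re ⟪A R₀ (R x - R₀ x), J A R x⟫`,
which is at most `‖A R₀‖ ‖R x - R₀ x‖ · (1 + C(1+δ)/δ) ‖A R₀‖ ‖x‖`.
-/

theorem le_of_sq_le_mul_self {a b : ℝ} (hb : 0 ≤ b) (h : a ^ 2 ≤ b * a) : a ≤ b := by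
  nlinarith

theorem ContinuousLinearMap.norm_map_of_isSelfAdjoint_of_involutive {𝕜 H : Type*} [RCLike 𝕜]
    [NormedAddCommGroup H] [InnerProductSpace 𝕜 H] [CompleteSpace H] {J : H →L[𝕜] H}
    (hJ : IsSelfAdjoint J) (hinv : ∀ y, J (J y) = y) (y : H) : ‖J y‖ = ‖y‖ := by
  have hsq : J * J = 1 := ContinuousLinearMap.ext hinv
  exact J.norm_map_of_mem_unitary (Unitary.mem_iff.mpr (by simp [hJ.star_eq, hsq])) y

section Resolvent

variable {E F : Type*} [NormedAddCommGroup E] [InnerProductSpace ℂ E]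
  [NormedAddCommGroup F] [InnerProductSpace ℂ F]
  {D : Submodule ℂ E} {H₀ W : E →ₗ[ℂ] E} {z : ℝ} {R₀ R : E →L[ℂ] E}

theorem inner_resolvent_left_eq_inner_resolvent_right
    (hH₀sym : ∀ x ∈ D, ∀ y ∈ D, ⟪H₀ x, y⟫_ℂ = ⟪x, H₀ y⟫_ℂ)
    (hR₀mem : ∀ x, R₀ x ∈ D) (hR₀left : ∀ x, H₀ (R₀ x) + (z : ℂ) • R₀ x = x) (x y : E) :
    ⟪R₀ x, y⟫_ℂ = ⟪x, R₀ y⟫_ℂ := by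
  conv_lhs => rw [← hR₀left y]
  conv_rhs => rw [← hR₀left x]
  rw [inner_add_right, inner_add_left, inner_smul_right, inner_smul_left, Complex.conj_ofReal,
    hH₀sym _ (hR₀mem x) _ (hR₀mem y)]

theorem resolvent_eq_resolvent₀_add_resolvent₀_comp
    (hR₀right : ∀ x ∈ D, R₀ (H₀ x + (z : ℂ) • x) = x) (hRmem : ∀ x, R x ∈ D)
    (hRleft : ∀ x, (H₀ (R x) - W (R x)) + (z : ℂ) • R x = x) (x : E) :
    R x = R₀ x + R₀ (W (R x)) := by
  have hx : H₀ (R x) + (z : ℂ) • R x = x + W (R x) := by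
    linear_combination (norm := module) hRleft x
  rw [← map_add, ← hx, hR₀right _ (hRmem x)]

theorem resolvent_eq_resolvent₀_add_resolvent_comp
    (hRright : ∀ x ∈ D, R ((H₀ x - W x) + (z : ℂ) • x) = x) (hR₀mem : ∀ x, R₀ x ∈ D)
    (hR₀left : ∀ x, H₀ (R₀ x) + (z : ℂ) • R₀ x = x) (x : E) :
    R x = R₀ x + R (W (R₀ x)) := by
  have hx : (H₀ (R₀ x) - W (R₀ x)) + (z : ℂ) • R₀ x = x - W (R₀ x) := by
    linear_combination (norm := module) hR₀left x
  rw [← sub_eq_iff_eq_add, ← map_sub, ← hx, hRright _ (hR₀mem x)]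

theorem re_inner_resolvent_le (hz : 0 ≤ z)
    (hRleft : ∀ x, (H₀ (R x) - W (R x)) + (z : ℂ) • R x = x) (y : E) :
    (⟪R y, H₀ (R y) - W (R y)⟫_ℂ).re ≤ (⟪R y, y⟫_ℂ).re := by
  have hsplit := congrArg (fun v => (⟪R y, v⟫_ℂ).re) (hRleft y)
  simp only [inner_add_right, inner_smul_right, Complex.add_re, Complex.re_ofReal_mul] at hsplit
  rw [← hsplit]
  exact le_add_of_nonneg_right (mul_nonneg hz (inner_self_nonneg (𝕜 := ℂ) (x := R y)))

theorem re_inner_apply_le_norm_mul_norm {A : E →ₗ[ℂ] F} {J : F →L[ℂ] F}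
    (hJ : ∀ w, ‖J w‖ ≤ ‖w‖) (hWdef : ∀ x ∈ D, ∀ y ∈ D, ⟪y, W x⟫_ℂ = ⟪A y, J (A x)⟫_ℂ)
    {x y : E} (hx : x ∈ D) (hy : y ∈ D) : (⟪y, W x⟫_ℂ).re ≤ ‖A y‖ * ‖A x‖ := by
  rw [hWdef x hx y hy]
  exact (re_inner_le_norm (𝕜 := ℂ) _ _).trans (mul_le_mul_of_nonneg_left (hJ _) (norm_nonneg _))

theorem norm_map_resolvent_comp_le {A : E →ₗ[ℂ] F} {J : F →L[ℂ] F} {δ C : ℝ}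
    (hJ : ∀ w, ‖J w‖ ≤ ‖w‖) (hWdef : ∀ x ∈ D, ∀ y ∈ D, ⟪y, W x⟫_ℂ = ⟪A y, J (A x)⟫_ℂ)
    (hδ : 0 < δ) (hform : ∀ x ∈ D, (1 + δ) * (⟪x, W x⟫_ℂ).re ≤ (⟪x, H₀ x⟫_ℂ).re)
    (hC : 0 ≤ C) (hCform : ∀ x ∈ D, ‖A x‖ ^ 2 ≤ C * (⟪x, H₀ x⟫_ℂ).re)
    (hz : 0 ≤ z) (hRmem : ∀ x, R x ∈ D)
    (hRleft : ∀ x, (H₀ (R x) - W (R x)) + (z : ℂ) • R x = x) {u : E} (hu : u ∈ D) :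
    ‖A (R (W u))‖ ≤ C * (1 + δ) / δ * ‖A u‖ := by
  set v := R (W u)
  have hv : v ∈ D := hRmem _
  have hH : (⟪v, H₀ v - W v⟫_ℂ).re ≤ ‖A v‖ * ‖A u‖ :=
    (re_inner_resolvent_le hz hRleft (W u)).trans
      (re_inner_apply_le_norm_mul_norm hJ hWdef hu hv)
  have hH_ge : δ * (⟪v, H₀ v⟫_ℂ).re ≤ (1 + δ) * (⟪v, H₀ v - W v⟫_ℂ).re := by
    rw [inner_sub_right, Complex.sub_re]
    linarith [hform v hv]
  refine le_of_sq_le_mul_self (by positivity) ?_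
  rw [div_mul_eq_mul_div, div_mul_eq_mul_div, le_div_iff₀ hδ]
  calc ‖A v‖ ^ 2 * δ ≤ C * (δ * (⟪v, H₀ v⟫_ℂ).re) := by nlinarith [hCform v hv]
    _ ≤ C * ((1 + δ) * (‖A v‖ * ‖A u‖)) := by gcongr C * ?_; exact hH_ge.trans (by gcongr)
    _ = C * (1 + δ) * ‖A u‖ * ‖A v‖ := by ring

theorem norm_map_resolvent_le {A : E →ₗ[ℂ] F} {J : F →L[ℂ] F} {δ C : ℝ}
    (hJ : ∀ w, ‖J w‖ ≤ ‖w‖) (hWdef : ∀ x ∈ D, ∀ y ∈ D, ⟪y, W x⟫_ℂ = ⟪A y, J (A x)⟫_ℂ)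
    (hδ : 0 < δ) (hform : ∀ x ∈ D, (1 + δ) * (⟪x, W x⟫_ℂ).re ≤ (⟪x, H₀ x⟫_ℂ).re)
    (hC : 0 ≤ C) (hCform : ∀ x ∈ D, ‖A x‖ ^ 2 ≤ C * (⟪x, H₀ x⟫_ℂ).re)
    (hz : 0 ≤ z) (hR₀mem : ∀ x, R₀ x ∈ D) (hRmem : ∀ x, R x ∈ D)
    (hR₀left : ∀ x, H₀ (R₀ x) + (z : ℂ) • R₀ x = x)
    (hRleft : ∀ x, (H₀ (R x) - W (R x)) + (z : ℂ) • R x = x)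
    (hRright : ∀ x ∈ D, R ((H₀ x - W x) + (z : ℂ) • x) = x) (x : E) :
    ‖A (R x)‖ ≤ (1 + C * (1 + δ) / δ) * ‖A (R₀ x)‖ := by
  rw [resolvent_eq_resolvent₀_add_resolvent_comp hRright hR₀mem hR₀left x, map_add]
  calc _ ≤ ‖A (R₀ x)‖ + ‖A (R (W (R₀ x)))‖ := norm_add_le _ _
    _ ≤ ‖A (R₀ x)‖ + C * (1 + δ) / δ * ‖A (R₀ x)‖ := by
      gcongr
      exact norm_map_resolvent_comp_le hJ hWdef hδ hform hC hCform hz hRmem hRleft (hR₀mem x)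
    _ = _ := by ring

end Resolvent

theorem resolvent_difference_bound_general
    {E F : Type*} [NormedAddCommGroup E] [InnerProductSpace ℂ E]
    [NormedAddCommGroup F] [InnerProductSpace ℂ F] [CompleteSpace F]
    (D : Submodule ℂ E) (H₀ W : E →ₗ[ℂ] E) (A : E →ₗ[ℂ] F)
    (J : F →L[ℂ] F) (hJsa : IsSelfAdjoint J) (hJunit : ∀ y, J (J y) = y)
    (hH₀sym : ∀ x ∈ D, ∀ y ∈ D, ⟪H₀ x, y⟫_ℂ = ⟪x, H₀ y⟫_ℂ)
    -- W = A*B with B = JA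
    (hWdef : ∀ x ∈ D, ∀ y ∈ D, ⟪y, W x⟫_ℂ = ⟪A y, J (A x)⟫_ℂ)
    -- H₀ ≥ 0
    (hH₀pos : ∀ x ∈ D, 0 ≤ (⟪x, H₀ x⟫_ℂ).re)
    -- H₀ − (1+δ)W ≥ 0
    (δ : ℝ) (hδ : 0 < δ)
    (hform : ∀ x ∈ D, (1 + δ) * (⟪x, W x⟫_ℂ).re ≤ (⟪x, H₀ x⟫_ℂ).re)
    -- C·H₀ ≥ A*A
    (C : ℝ) (hC : 0 < C)
    (hCform : ∀ x ∈ D, ‖A x‖ ^ 2 ≤ C * (⟪x, H₀ x⟫_ℂ).re)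
    -- the resolvents R₀ = (H₀+z)⁻¹ and R = (H+z)⁻¹, z > 0
    (z : ℝ) (hz : 0 < z) (R₀ R : E →L[ℂ] E)
    (hR₀mem : ∀ x, R₀ x ∈ D) (hRmem : ∀ x, R x ∈ D)
    (hR₀left : ∀ x, H₀ (R₀ x) + (z : ℂ) • R₀ x = x)
    (hR₀right : ∀ x ∈ D, R₀ (H₀ x + (z : ℂ) • x) = x)
    (hRleft : ∀ x, (H₀ (R x) - W (R x)) + (z : ℂ) • R x = x)
    (hRright : ∀ x ∈ D, R ((H₀ x - W x) + (z : ℂ) • x) = x)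
    -- the bounded operator A R₀(z)
    (AR₀ : E →L[ℂ] F) (hAR₀ : ∀ x, AR₀ x = A (R₀ x)) :
    (∀ x ∈ D, 0 ≤ (⟪x, H₀ x - W x⟫_ℂ).re) ∧
    ∀ x : E, ‖R x - R₀ x‖ ≤ (1 + C * (1 + δ) / δ) * ‖AR₀‖ ^ 2 * ‖x‖ := by
  set K := C * (1 + δ) / δ
  have hJ (w : F) : ‖J w‖ ≤ ‖w‖ := (J.norm_map_of_isSelfAdjoint_of_involutive hJsa hJunit w).le
  have hAR (x : E) : ‖A (R x)‖ ≤ (1 + K) * ‖AR₀ x‖ := by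
    rw [hAR₀]
    exact norm_map_resolvent_le hJ hWdef hδ hform hC.le hCform hz.le hR₀mem hRmem hR₀left
      hRleft hRright x
  refine ⟨fun x hx => ?_, fun x => ?_⟩
  · rw [inner_sub_right, Complex.sub_re]
    nlinarith [hform x hx, hH₀pos x hx]
  · set t := R x - R₀ x
    have ht : t = R₀ (W (R x)) :=
      sub_eq_iff_eq_add'.mpr (resolvent_eq_resolvent₀_add_resolvent₀_comp hR₀right hRmem hRleft x)
    refine le_of_sq_le_mul_self (by positivity) ?_
    calc ‖t‖ ^ 2 = (⟪R₀ t, W (R x)⟫_ℂ).re := by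
          rw [inner_resolvent_left_eq_inner_resolvent_right hH₀sym hR₀mem hR₀left, ← ht]
          exact (inner_self_eq_norm_sq (𝕜 := ℂ) t).symm
      _ ≤ ‖AR₀ t‖ * ‖A (R x)‖ := by
        rw [hAR₀]
        exact re_inner_apply_le_norm_mul_norm hJ hWdef (hRmem x) (hR₀mem t)
      _ ≤ (‖AR₀‖ * ‖t‖) * ((1 + K) * (‖AR₀‖ * ‖x‖)) := by
        gcongr
        · exact AR₀.le_opNorm t
        · exact (hAR x).trans (by gcongr; exact AR₀.le_opNorm x)
      _ = (1 + K) * ‖AR₀‖ ^ 2 * ‖x‖ * ‖t‖ := by ring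

/-- Proposition 2.1 (abstract form).  Let `H₀ ≥ 0` be self-adjoint with domain `D`,
`W = A*B` with `B = JA` for a self-adjoint unitary `J`, and `H = H₀ − W`.  If
`H₀ − (1+δ)W ≥ 0` and `C·H₀ ≥ A*A` in the quadratic-form sense on `D`, then `H ≥ 0`
and `‖(H+z)⁻¹ − (H₀+z)⁻¹‖ ≤ (1 + C(1+δ)/δ)‖A R₀(z)‖²` for every `z > 0`; the
resolvents are encoded as two-sided inverses `R₀, R`. -/
theorem resolvent_difference_bound
    {E F : Type*} [NormedAddCommGroup E] [InnerProductSpace ℂ E] [CompleteSpace E]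
    [NormedAddCommGroup F] [InnerProductSpace ℂ F] [CompleteSpace F]
    (D : Submodule ℂ E) (H₀ W : E →ₗ[ℂ] E) (A : E →ₗ[ℂ] F)
    (J : F →L[ℂ] F) (hJsa : IsSelfAdjoint J) (hJunit : ∀ y, J (J y) = y)
    (hH₀sym : ∀ x ∈ D, ∀ y ∈ D, ⟪H₀ x, y⟫_ℂ = ⟪x, H₀ y⟫_ℂ)
    -- W = A*B with B = JA
    (hWdef : ∀ x ∈ D, ∀ y ∈ D, ⟪y, W x⟫_ℂ = ⟪A y, J (A x)⟫_ℂ)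
    -- H₀ ≥ 0
    (hH₀pos : ∀ x ∈ D, 0 ≤ (⟪x, H₀ x⟫_ℂ).re)
    -- H₀ − (1+δ)W ≥ 0
    (δ : ℝ) (hδ : 0 < δ)
    (hform : ∀ x ∈ D, (1 + δ) * (⟪x, W x⟫_ℂ).re ≤ (⟪x, H₀ x⟫_ℂ).re)
    -- C·H₀ ≥ A*A
    (C : ℝ) (hC : 0 < C)
    (hCform : ∀ x ∈ D, ‖A x‖ ^ 2 ≤ C * (⟪x, H₀ x⟫_ℂ).re)
    -- the resolvents R₀ = (H₀+z)⁻¹ and R = (H+z)⁻¹, z > 0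
    (z : ℝ) (hz : 0 < z) (R₀ R : E →L[ℂ] E)
    (hR₀mem : ∀ x, R₀ x ∈ D) (hRmem : ∀ x, R x ∈ D)
    (hR₀left : ∀ x, H₀ (R₀ x) + (z : ℂ) • R₀ x = x)
    (hR₀right : ∀ x ∈ D, R₀ (H₀ x + (z : ℂ) • x) = x)
    (hRleft : ∀ x, (H₀ (R x) - W (R x)) + (z : ℂ) • R x = x)
    (hRright : ∀ x ∈ D, R ((H₀ x - W x) + (z : ℂ) • x) = x)
    -- the bounded operator A R₀(z)
    (AR₀ : E →L[ℂ] F) (hAR₀ : ∀ x, AR₀ x = A (R₀ x)) :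
    (∀ x ∈ D, 0 ≤ (⟪x, H₀ x - W x⟫_ℂ).re) ∧
    ∀ x : E, ‖R x - R₀ x‖ ≤ (1 + C * (1 + δ) / δ) * ‖AR₀‖ ^ 2 * ‖x‖ :=
  resolvent_difference_bound_general D H₀ W A J hJsa hJunit hH₀sym hWdef hH₀pos δ hδ hform C hC
    hCform z hz R₀ R hR₀mem hRmem hR₀left hR₀right hRleft hRright AR₀ hAR₀
end
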